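/- arXiv:2007.13132 — 4 statements merged into one kernel-verified Lean document; each statement's English description precedes it below -/
import Mathlib

section
/- If D is a directed cycle of order n (vertices 1,…,n with arcs i → i+1 taken modulo n), then γ_I(D) = n. -/
/-- An Italian dominating function on a digraph given by adjacency relation `adj`:
`f : V → {0,1,2}` such that every vertex with value 0 has an in-neighbor with value 2
or two distinct in-neighbors with value 1. -/
def IsIDF {V : Type*} (adj : V → V → Prop) (f : V → ℕ) : Prop :=
  (∀ v, f v ≤ 2) ∧ ∀ v, f v = 0 →
    (∃ w, adj w v ∧ f w = 2) ∨
    (∃ w₁ w₂, w₁ ≠ w₂ ∧ adj w₁ v ∧ adj w₂ v ∧ f w₁ = 1 ∧ f w₂ = 1)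

/-- The Italian domination number: minimum weight of an Italian dominating function. -/
noncomputable def italianDomNum (V : Type*) [Fintype V] (adj : V → V → Prop) : ℕ :=
  sInf {w : ℕ | ∃ f : V → ℕ, IsIDF adj f ∧ ∑ v, f v = w}

/-- The directed cycle on `n` vertices: arc `i → i+1 (mod n)`. -/
def cycleAdj (n : ℕ) (i j : Fin n) : Prop := (j : ℕ) = ((i : ℕ) + 1) % n

/-- Cartesian product of digraphs. -/
def cartAdj {α β : Type*} (A : α → α → Prop) (B : β → β → Prop) (x y : α × β) : Prop :=
  (x.1 = y.1 ∧ B x.2 y.2) ∨ (A x.1 y.1 ∧ x.2 = y.2)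

/-- Strong product of digraphs. -/
def strongAdj {α β : Type*} (A : α → α → Prop) (B : β → β → Prop) (x y : α × β) : Prop :=
  (A x.1 y.1 ∧ B x.2 y.2) ∨ (x.1 = y.1 ∧ B x.2 y.2) ∨ (A x.1 y.1 ∧ x.2 = y.2)

/-- Maximum out-degree of a finite digraph. -/
noncomputable def maxOutDeg (V : Type*) [Fintype V] (adj : V → V → Prop) : ℕ :=
  Finset.univ.sup fun v => Nat.card {w | adj v w}

/-- Maximum in-degree of a finite digraph. -/
noncomputable def maxInDeg (V : Type*) [Fintype V] (adj : V → V → Prop) : ℕ :=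
  Finset.univ.sup fun v => Nat.card {w | adj w v}

/-! When every vertex has at most one in-neighbor and at most one out-neighbor, as in a directed
cycle, a vertex with value 0 needs its in-neighbor to have value 2, and distinct vertices have
distinct in-neighbors; so there are at least as many 2s as 0s and the weight is at least the
order. The constant function 1 attains it. -/

section ItalianDomination

open Finset

variable {V : Type*} {adj : V → V → Prop}

lemma isIDF_one : IsIDF adj fun _ => 1 :=
  ⟨fun _ => by norm_num, fun _ h => absurd h one_ne_zero⟩

lemma card_le_sum_of_card_filter_eq_zero_le [Fintype V] {f : V → ℕ} (hf : ∀ v, f v ≤ 2)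
    (hZT : #{v | f v = 0} ≤ #{v | f v = 2}) : Fintype.card V ≤ ∑ v, f v := by
  have hv : ∀ v, 1 + (if f v = 2 then 1 else 0) ≤ f v + (if f v = 0 then 1 else 0) := by
    intro v; have := hf v; split_ifs <;> omega
  have hsum := sum_le_sum fun v (_ : v ∈ univ) => hv v
  simp only [sum_add_distrib, sum_const, card_univ, smul_eq_mul, mul_one, sum_boole,
    Nat.cast_id] at hsum
  omega

lemma IsIDF.card_filter_eq_zero_le [Fintype V] {f : V → ℕ} (hf : IsIDF adj f)
    (hin : ∀ u u' v, adj u v → adj u' v → u = u') (hout : ∀ u v v', adj u v → adj u v' → v = v') :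
    #{v | f v = 0} ≤ #{v | f v = 2} := by
  refine card_le_card_of_forall_subsingleton (fun v w => adj w v) (fun v hv => ?_)
    fun w _ v hv v' hv' => hout w v v' hv.2 hv'.2
  rcases hf.2 v (mem_filter.1 hv).2 with ⟨w, hwv, hw⟩ | ⟨w₁, w₂, hne, h₁, h₂, -⟩
  · exact ⟨w, mem_filter.2 ⟨mem_univ w, hw⟩, hwv⟩
  · exact absurd (hin w₁ w₂ v h₁ h₂) hne

lemma IsIDF.card_le_sum [Fintype V] {f : V → ℕ} (hf : IsIDF adj f)
    (hin : ∀ u u' v, adj u v → adj u' v → u = u') (hout : ∀ u v v', adj u v → adj u v' → v = v') :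
    Fintype.card V ≤ ∑ v, f v :=
  card_le_sum_of_card_filter_eq_zero_le hf.1 (hf.card_filter_eq_zero_le hin hout)

theorem italianDomNum_eq_card [Fintype V] (hin : ∀ u u' v, adj u v → adj u' v → u = u')
    (hout : ∀ u v v', adj u v → adj u v' → v = v') :
    italianDomNum V adj = Fintype.card V := by
  have hone : Fintype.card V ∈ {w | ∃ f : V → ℕ, IsIDF adj f ∧ ∑ v, f v = w} :=
    ⟨_, isIDF_one, by simp⟩
  refine le_antisymm (Nat.sInf_le hone) (le_csInf ⟨_, hone⟩ ?_)
  rintro _ ⟨f, hf, rfl⟩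
  exact hf.card_le_sum hin hout

end ItalianDomination

lemma cycleAdj_left_unique {n : ℕ} {i i' j : Fin n} (h : cycleAdj n i j) (h' : cycleAdj n i' j) :
    i = i' := by
  have hmod : (i : ℕ) + 1 ≡ i' + 1 [MOD n] := h.symm.trans h'
  have := Nat.ModEq.add_right_cancel' 1 hmod
  exact Fin.ext (by rwa [Nat.ModEq, Nat.mod_eq_of_lt i.2, Nat.mod_eq_of_lt i'.2] at this)

lemma cycleAdj_right_unique {n : ℕ} {i j j' : Fin n} (h : cycleAdj n i j) (h' : cycleAdj n i j') :
    j = j' :=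
  Fin.ext (h.trans h'.symm)

theorem stmt2_general (n : ℕ) :
    italianDomNum (Fin n) (cycleAdj n) = n := by
  simpa using italianDomNum_eq_card (adj := cycleAdj n) (fun _ _ _ => cycleAdj_left_unique)
    fun _ _ _ => cycleAdj_right_unique

theorem stmt2 (n : ℕ) (hn : 2 ≤ n) :
    italianDomNum (Fin n) (cycleAdj n) = n :=
  stmt2_general n
end

section
/- For m = 2r and n = 2s with r, s positive integers, the function f on V(C_m □ C_n) defined by f((2i−1, 2j−1)) = f((2i, 2j)) = 1 for 1 ≤ i ≤ r, 1 ≤ j ≤ s, and f = 0 otherwise, is an Italian dominating function of C_m □ C_n of weight mn/2. -/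
/-- With vertices indexed from `0`, the paper's `(2i−1, 2j−1)` and `(2i, 2j)` are exactly the
vertices whose coordinates have equal parity. -/
def checkerboard (m n : ℕ) (p : Fin m × Fin n) : ℕ :=
  if (p.1 : ℕ) % 2 = (p.2 : ℕ) % 2 then 1 else 0

lemma exists_cycleAdj_mod_two_ne {n : ℕ} (hn : Even n) (b : Fin n) :
    ∃ a : Fin n, cycleAdj n a b ∧ (a : ℕ) % 2 ≠ (b : ℕ) % 2 := by
  obtain ⟨k, rfl⟩ := hn
  have hb := b.isLt
  by_cases hb0 : (b : ℕ) = 0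
  · refine ⟨⟨k + k - 1, by omega⟩, ?_, by simp only [hb0]; omega⟩
    simp only [cycleAdj, hb0]
    rw [show k + k - 1 + 1 = k + k by omega, Nat.mod_self]
  · refine ⟨⟨b - 1, by omega⟩, ?_, by simp only; omega⟩
    simp only [cycleAdj]
    rw [Nat.sub_add_cancel (by omega), Nat.mod_eq_of_lt hb]

lemma isIDF_checkerboard {m n : ℕ} (hm : Even m) (hn : Even n) :
    IsIDF (cartAdj (cycleAdj m) (cycleAdj n)) (checkerboard m n) := by
  refine ⟨fun p => by unfold checkerboard; split <;> omega, fun ⟨a, b⟩ hzero => Or.inr ?_⟩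
  have hab : (a : ℕ) % 2 ≠ (b : ℕ) % 2 := by
    intro h; simp [checkerboard, h] at hzero
  obtain ⟨a', ha'a, ha'⟩ := exists_cycleAdj_mod_two_ne hm a
  obtain ⟨b', hb'b, hb'⟩ := exists_cycleAdj_mod_two_ne hn b
  refine ⟨(a', b), (a, b'), fun h => ha' (by rw [(Prod.mk.inj h).1]),
    Or.inr ⟨ha'a, rfl⟩, Or.inl ⟨rfl, hb'b⟩, ?_, ?_⟩ <;>
  · simp only [checkerboard, ite_eq_left_iff]
    omega

lemma sum_fin_mod_two_eq {n : ℕ} (hn : Even n) {c : ℕ} (hc : c < 2) :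
    (∑ b : Fin n, if c = (b : ℕ) % 2 then 1 else 0) = n / 2 := by
  obtain ⟨k, rfl⟩ := hn
  rw [Fin.sum_univ_eq_sum_range (fun b => if c = b % 2 then 1 else 0), ← two_mul,
    Nat.mul_div_cancel_left _ two_pos]
  induction k with
  | zero => simp
  | succ k ih =>
    rw [show 2 * (k + 1) = 2 * k + 1 + 1 by ring, Finset.sum_range_succ, Finset.sum_range_succ, ih]
    interval_cases c <;> simp [Nat.add_mod]

lemma sum_checkerboard (m : ℕ) {n : ℕ} (hn : Even n) :
    ∑ p, checkerboard m n p = m * n / 2 := by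
  simp only [checkerboard, Fintype.sum_prod_type,
    fun a : Fin m => sum_fin_mod_two_eq hn (Nat.mod_lt (a : ℕ) two_pos),
    Finset.sum_const, Finset.card_univ, Fintype.card_fin, smul_eq_mul]
  exact (Nat.mul_div_assoc m (even_iff_two_dvd.mp hn)).symm

theorem stmt5_general (r s m n : ℕ) (hm : m = 2 * r) (hn : n = 2 * s) :
    IsIDF (cartAdj (cycleAdj m) (cycleAdj n))
      (fun p : Fin m × Fin n => if (p.1 : ℕ) % 2 = (p.2 : ℕ) % 2 then 1 else 0) ∧
    (∑ p : Fin m × Fin n, if (p.1 : ℕ) % 2 = (p.2 : ℕ) % 2 then 1 else 0) = m * n / 2 := by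
  have hm_even : Even m := hm ▸ even_two_mul r
  have hn_even : Even n := hn ▸ even_two_mul s
  exact ⟨isIDF_checkerboard hm_even hn_even, sum_checkerboard m hn_even⟩

theorem stmt5 (r s m n : ℕ) (hr : 1 ≤ r) (hs : 1 ≤ s) (hm : m = 2 * r) (hn : n = 2 * s) :
    IsIDF (cartAdj (cycleAdj m) (cycleAdj n))
      (fun p : Fin m × Fin n => if (p.1 : ℕ) % 2 = (p.2 : ℕ) % 2 then 1 else 0) ∧
    (∑ p : Fin m × Fin n, if (p.1 : ℕ) % 2 = (p.2 : ℕ) % 2 then 1 else 0) = m * n / 2 :=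
  stmt5_general r s m n hm hn
end

section
/- For every odd integer n ≥ 3, the Italian domination number of the cartesian product C₂ □ C_n of directed cycles equals n + 1. -/
/-! A column of weight `0` forces both vertices of the previous column to carry `2`; discharging
along the cycle then shows that the column weights `c j` satisfy `∑ c ≥ n`, with equality only if
every column has weight `1`. In that case no vertex carries `2`, so every `0` has both in-neighbours
equal to `1`, which makes `f` invariant under the shift `(a, j) ↦ (a + 1, j + 1)`. Going once around
the odd cycle turns this into invariance under `(a, j) ↦ (a + 1, j)`, impossible in a column of
weight `1`. For the upper bound, put `1` on `(j mod 2, j)` for every `j` and on `(1, n - 1)`. -/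

open Finset Function

section ItalianDomination

variable {V : Type*} {adj : V → V → Prop} {f : V → ℕ}

def IsTwoDominating (adj : V → V → Prop) (S : Finset V) : Prop :=
  ∀ v ∉ S, ∃ w₁ w₂, w₁ ≠ w₂ ∧ adj w₁ v ∧ adj w₂ v ∧ w₁ ∈ S ∧ w₂ ∈ S

theorem IsIDF.eq_two_or_both_eq_one (hf : IsIDF adj f) {v u₁ u₂ : V}
    (hin : ∀ w, adj w v → w = u₁ ∨ w = u₂) (hv : f v = 0) :
    f u₁ = 2 ∨ f u₂ = 2 ∨ (f u₁ = 1 ∧ f u₂ = 1) := by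
  rcases hf.2 v hv with ⟨w, hw, hw₂⟩ | ⟨w₁, w₂, hne, h₁, h₂, hw₁, hw₂⟩
  · rcases hin w hw with rfl | rfl <;> simp [hw₂]
  · rcases hin w₁ h₁ with rfl | rfl <;> rcases hin w₂ h₂ with rfl | rfl
    · exact absurd rfl hne
    · exact Or.inr (Or.inr ⟨hw₁, hw₂⟩)
    · exact Or.inr (Or.inr ⟨hw₂, hw₁⟩)
    · exact absurd rfl hne

theorem IsTwoDominating.isIDF_indicator [DecidableEq V] {S : Finset V}
    (hS : IsTwoDominating adj S) :
    IsIDF adj fun v => if v ∈ S then 1 else 0 := by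
  refine ⟨fun v => by dsimp only; split_ifs <;> norm_num, fun v hv => Or.inr ?_⟩
  obtain ⟨w₁, w₂, hne, h₁, h₂, hw₁, hw₂⟩ := hS v (by simpa using hv)
  exact ⟨w₁, w₂, hne, h₁, h₂, if_pos hw₁, if_pos hw₂⟩

variable [Fintype V]

theorem italianDomNum_le (hf : IsIDF adj f) : italianDomNum V adj ≤ ∑ v, f v :=
  Nat.sInf_le ⟨f, hf, rfl⟩

theorem IsTwoDominating.italianDomNum_le_card [DecidableEq V] {S : Finset V}
    (hS : IsTwoDominating adj S) : italianDomNum V adj ≤ #S := by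
  simpa using italianDomNum_le hS.isIDF_indicator

theorem le_italianDomNum {k : ℕ} (h : ∀ f, IsIDF adj f → k ≤ ∑ v, f v) :
    k ≤ italianDomNum V adj :=
  le_csInf ⟨_, fun _ => 2, ⟨fun _ => le_rfl, fun _ h => absurd h two_ne_zero⟩, rfl⟩
    fun _ ⟨f, hf, hw⟩ => hw ▸ h f hf

end ItalianDomination

/-- Discharging: each zero of `c` hands `2` to its predecessor. -/
theorem card_add_card_ne_one_le_sum {G : Type*} [AddGroup G] [Fintype G] (c : G → ℕ) (g : G)
    (hc : ∀ i, c (i + g) = 0 → 4 ≤ c i) :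
    Fintype.card G + #{i | c i ≠ 1} ≤ ∑ i, c i := by
  let z : G → ℕ := fun i => if c i = 0 then 2 else 0
  have hlocal : ∀ i, 1 + z (i + g) + (if c i ≠ 1 then 1 else 0) ≤ c i + z i := by
    intro i
    by_cases h : c (i + g) = 0
    · have := hc i h
      simp only [z, h, if_true]
      split_ifs <;> omega
    · simp only [z, h, if_false]
      split_ifs <;> omega
  have hshift : ∑ i, z (i + g) = ∑ i, z i := Equiv.sum_comp (Equiv.addRight g) z
  have := Finset.sum_le_sum fun i (_ : i ∈ univ) => hlocal i
  simp only [sum_add_distrib, hshift, sum_boole, sum_const, card_univ, smul_eq_mul, mul_one,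
    Nat.cast_id] at this
  omega

section CycleProduct

variable {m n : ℕ} [NeZero m] [NeZero n]

theorem cycleAdj_iff {i j : Fin n} : cycleAdj n i j ↔ i = j - 1 := by
  rw [eq_sub_iff_add_eq, eq_comm, Fin.ext_iff, Fin.val_add, Fin.val_one', Nat.add_mod_mod]
  rfl

theorem cartAdj_cycleAdj_iff {w : Fin m × Fin n} {a : Fin m} {j : Fin n} :
    cartAdj (cycleAdj m) (cycleAdj n) w (a, j) ↔ w = (a, j - 1) ∨ w = (a - 1, j) := by
  obtain ⟨b, i⟩ := w
  simp only [cartAdj, cycleAdj_iff, Prod.mk.injEq]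

variable {f : Fin m × Fin n → ℕ}

theorem IsIDF.cycleProd_cover (hf : IsIDF (cartAdj (cycleAdj m) (cycleAdj n)) f) {a : Fin m}
    {j : Fin n} (h : f (a, j) = 0) :
    f (a, j - 1) = 2 ∨ f (a - 1, j) = 2 ∨ (f (a, j - 1) = 1 ∧ f (a - 1, j) = 1) :=
  hf.eq_two_or_both_eq_one (fun _ => cartAdj_cycleAdj_iff.1) h

theorem IsIDF.colSum_sub_one_of_colSum_eq_zero
    (hf : IsIDF (cartAdj (cycleAdj m) (cycleAdj n)) f) {j : Fin n} (h : ∑ a, f (a, j) = 0) :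
    ∑ a, f (a, j - 1) = 2 * m := by
  have hzero : ∀ a, f (a, j) = 0 := by simpa using h
  have htwo : ∀ a, f (a, j - 1) = 2 := fun a => by
    have := hf.cycleProd_cover (hzero a)
    rw [hzero] at this
    omega
  simp [htwo, mul_comm]

end CycleProduct

section TwoRows

variable {n : ℕ} [NeZero n] {f : Fin 2 × Fin n → ℕ}

theorem IsIDF.periodic_of_colSum_eq_one (hf : IsIDF (cartAdj (cycleAdj 2) (cycleAdj n)) f)
    (hcol : ∀ j, ∑ a, f (a, j) = 1) : Periodic f (1, 1) := by
  have hpair : ∀ a j, f (a, j) + f (a - 1, j) = 1 := by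
    intro a j
    have := hcol j
    rw [Fin.sum_univ_two] at this
    fin_cases a
    · exact this
    · rw [add_comm]
      exact this
  have hzero : ∀ a j, f (a + 1, j + 1) = 0 → f (a, j) = 0 := by
    intro a j h
    have hcover := hf.cycleProd_cover h
    have h₁ := hpair (a + 1) j
    have h₂ := hpair a (j + 1)
    simp only [add_sub_cancel_right] at hcover h₁
    omega
  have hone : ∀ a j, f (a + 1, j + 1) = 1 → f (a, j) = 1 := by
    intro a j h
    have h₁ := hpair (a + 1) (j + 1)
    simp only [add_sub_cancel_right] at h₁
    have hcover := hf.cycleProd_cover (a := a) (j := j + 1) (by omega)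
    have h₂ := hpair a j
    have h₃ := hpair a (j + 1)
    simp only [add_sub_cancel_right] at hcover
    omega
  rintro ⟨a, j⟩
  have := hpair (a + 1) (j + 1)
  simp only [add_sub_cancel_right] at this
  rw [Prod.mk_add_mk]
  rcases (by omega : f (a + 1, j + 1) = 0 ∨ f (a + 1, j + 1) = 1) with h | h
  · rw [h, hzero a j h]
  · rw [h, hone a j h]

theorem IsIDF.exists_colSum_ne_one (hf : IsIDF (cartAdj (cycleAdj 2) (cycleAdj n)) f)
    (hodd : Odd n) : ∃ j, ∑ a, f (a, j) ≠ 1 := by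
  by_contra! hcol
  obtain ⟨k, hk⟩ := hodd
  have hshift : n • ((1, 1) : Fin 2 × Fin n) = (1, 0) := by
    have h₂ : 2 • (1 : Fin 2) = 0 := rfl
    have h₁ : n • (1 : Fin 2) = 1 := by rw [hk, succ_nsmul, mul_nsmul, h₂, nsmul_zero, zero_add]
    have hn : n • (1 : Fin n) = 0 := by simpa using card_nsmul_eq_zero (G := Fin n) (x := 1)
    rw [Prod.smul_mk, h₁, hn]
  have hper := (hf.periodic_of_colSum_eq_one hcol).nsmul n
  rw [hshift] at hper
  obtain ⟨j⟩ := (inferInstance : Nonempty (Fin n))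
  have h₁ := hper (0, j)
  have h₂ := hcol j
  rw [Prod.mk_add_mk, zero_add, add_zero] at h₁
  rw [Fin.sum_univ_two] at h₂
  omega

theorem IsIDF.add_one_le_sum_of_odd (hf : IsIDF (cartAdj (cycleAdj 2) (cycleAdj n)) f)
    (hodd : Odd n) : n + 1 ≤ ∑ v, f v := by
  have hdischarge := card_add_card_ne_one_le_sum (fun j => ∑ a, f (a, j)) 1 fun j hj => by
    have := hf.colSum_sub_one_of_colSum_eq_zero hj
    rw [add_sub_cancel_right] at this
    omega
  obtain ⟨j, hj⟩ := hf.exists_colSum_ne_one hodd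
  have hpos : 0 < #{j | ∑ a, f (a, j) ≠ 1} := card_pos.2 ⟨j, by simpa using hj⟩
  rw [Fintype.card_fin] at hdischarge
  rw [Fintype.sum_prod_type_right]
  omega

end TwoRows

section Construction

variable {k : ℕ}

def parityRow {n : ℕ} (j : Fin n) : Fin 2 := ⟨j % 2, Nat.mod_lt _ two_pos⟩

def alternatingSet (k : ℕ) : Finset (Fin 2 × Fin (2 * k + 1)) :=
  cons (1, Fin.last _) (univ.image fun j => (parityRow j, j))
    (by simp [parityRow, Fin.ext_iff]; omega)

theorem mem_alternatingSet {a : Fin 2} {j : Fin (2 * k + 1)} :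
    (a, j) ∈ alternatingSet k ↔ (a, j) = (1, Fin.last _) ∨ a = parityRow j := by
  simp [alternatingSet, Prod.ext_iff, eq_comm]

theorem card_alternatingSet : #(alternatingSet k) = 2 * k + 2 := by
  rw [alternatingSet, card_cons, card_image_of_injective _ fun _ _ h => (Prod.ext_iff.1 h).2,
    card_univ, Fintype.card_fin]

theorem isTwoDominating_alternatingSet :
    IsTwoDominating (cartAdj (cycleAdj 2) (cycleAdj (2 * k + 1))) (alternatingSet k) := by
  rintro ⟨a, j⟩ hv
  rw [mem_alternatingSet, not_or] at hv
  have hne : ∀ b : Fin 2, b ≠ b - 1 := by decide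
  have hsub : ∀ b c : Fin 2, b ≠ c → b - 1 = c := by decide
  refine ⟨(a, j - 1), (a - 1, j), fun h => hne a (congrArg Prod.fst h),
    cartAdj_cycleAdj_iff.2 (Or.inl rfl), cartAdj_cycleAdj_iff.2 (Or.inr rfl), ?_,
    mem_alternatingSet.2 (Or.inr (hsub a _ hv.2))⟩
  · have ha : (a : ℕ) ≠ j % 2 := fun h => hv.2 (Fin.ext h)
    have ha₂ := a.isLt
    rw [mem_alternatingSet]
    simp only [Prod.ext_iff, Fin.ext_iff, parityRow, Fin.coe_sub_one, Fin.val_last, Fin.val_one,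
      Fin.val_zero]
    split_ifs <;> omega

end Construction

theorem stmt6_general (n : ℕ) (hodd : Odd n) :
    italianDomNum (Fin 2 × Fin n) (cartAdj (cycleAdj 2) (cycleAdj n)) = n + 1 := by
  have : NeZero n := ⟨hodd.pos.ne'⟩
  refine le_antisymm ?_ (le_italianDomNum fun f hf => hf.add_one_le_sum_of_odd hodd)
  obtain ⟨k, rfl⟩ := hodd
  simpa [card_alternatingSet] using isTwoDominating_alternatingSet.italianDomNum_le_card

theorem stmt6 (n : ℕ) (hn : 3 ≤ n) (hodd : Odd n) :
    italianDomNum (Fin 2 × Fin n) (cartAdj (cycleAdj 2) (cycleAdj n)) = n + 1 :=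
  stmt6_general n hodd
end

section
/- For an odd integer n ≥ 3, γ_I(C₂ □ C_n) ≤ n + 1; explicitly, the function f with f((1, 2j−1)) = 1 for 1 ≤ j ≤ (n+1)/2, f((2, 2j)) = 1 for 1 ≤ j ≤ (n−1)/2, f((2, n)) = 1, and f = 0 otherwise, is an Italian dominating function of C₂ □ C_n of weight n + 1. -/
/-!
Every vertex labelled `0` is `(0, i)` with `i` odd or `(1, i)` with `i` even and `i < n - 1`.
Its in-neighbours `(r - 1, i)` and `(r, i - 1)` are then both labelled `1`; for `(1, 0)` the
predecessor is `(1, n - 1)`, which is why that vertex gets an extra `1`. Because `n - 1` is even,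
every column carries exactly one `1` except the last, which carries two, so the weight is `n + 1`.
-/

theorem italianDomNum_le_sum {V : Type*} [Fintype V] {adj : V → V → Prop} {f : V → ℕ}
    (hf : IsIDF adj f) : italianDomNum V adj ≤ ∑ v, f v :=
  Nat.sInf_le ⟨f, hf, rfl⟩

theorem cycleAdj_sub_one {k : ℕ} (i : Fin (k + 1)) : cycleAdj (k + 1) (i - 1) i := by
  unfold cycleAdj
  rw [Fin.coe_sub_one]
  split_ifs with h
  · simp [h]
  · have hi : (i : ℕ) ≠ 0 := Fin.val_ne_iff.mpr h
    rw [Nat.sub_add_cancel (Nat.pos_of_ne_zero hi), Nat.mod_eq_of_lt i.isLt]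

theorem isIDF_cartAdj_cycle_of_pred {a b : ℕ} {f : Fin (a + 2) × Fin (b + 1) → ℕ}
    (hle : ∀ v, f v ≤ 1)
    (hpred : ∀ r i, f (r, i) = 0 → f (r - 1, i) = 1 ∧ f (r, i - 1) = 1) :
    IsIDF (cartAdj (cycleAdj (a + 2)) (cycleAdj (b + 1))) f := by
  refine ⟨fun v => (hle v).trans one_le_two, fun ⟨r, i⟩ hv => Or.inr ?_⟩
  obtain ⟨hrow, hcol⟩ := hpred r i hv
  refine ⟨(r - 1, i), (r, i - 1), ?_, Or.inr ⟨cycleAdj_sub_one r, rfl⟩,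
    Or.inl ⟨rfl, cycleAdj_sub_one i⟩, hrow, hcol⟩
  simp [Prod.ext_iff, sub_eq_self]

def prismLabel (n : ℕ) (p : Fin 2 × Fin n) : ℕ :=
  if ((p.1 : ℕ) = 0 ∧ (p.2 : ℕ) % 2 = 0) ∨
     ((p.1 : ℕ) = 1 ∧ ((p.2 : ℕ) % 2 = 1 ∨ (p.2 : ℕ) = n - 1)) then 1 else 0

theorem prismLabel_le_one (n : ℕ) (p : Fin 2 × Fin n) : prismLabel n p ≤ 1 := by
  unfold prismLabel; split <;> omega

theorem prismLabel_pred (m : ℕ) (r : Fin 2) (i : Fin (2 * m + 1))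
    (h : prismLabel (2 * m + 1) (r, i) = 0) :
    prismLabel (2 * m + 1) (r - 1, i) = 1 ∧ prismLabel (2 * m + 1) (r, i - 1) = 1 := by
  unfold prismLabel at *
  rcases eq_or_ne i 0 with rfl | hi
  · fin_cases r <;> simp_all
  · have hi' : (i : ℕ) ≠ 0 := Fin.val_ne_iff.mpr hi
    fin_cases r <;> simp [Fin.val_sub_one_of_ne_zero hi] at h ⊢ <;> omega

theorem prismLabel_column (m : ℕ) (i : Fin (2 * m + 1)) :
    prismLabel (2 * m + 1) (0, i) + prismLabel (2 * m + 1) (1, i) =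
      1 + if i = Fin.last (2 * m) then 1 else 0 := by
  simp only [prismLabel, Fin.ext_iff, Fin.val_last, Fin.isValue, Fin.coe_ofNat_eq_mod,
    Nat.zero_mod, Nat.mod_succ, true_and, false_and, zero_ne_one, one_ne_zero, or_false,
    false_or, add_tsub_cancel_right]
  split_ifs <;> omega

theorem sum_prismLabel (m : ℕ) : ∑ p, prismLabel (2 * m + 1) p = 2 * m + 1 + 1 := by
  rw [Fintype.sum_prod_type, Fin.sum_univ_two, ← Finset.sum_add_distrib]
  simp [prismLabel_column, Finset.sum_add_distrib]

theorem stmt7_general (n : ℕ) (hodd : Odd n) :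
    (IsIDF (cartAdj (cycleAdj 2) (cycleAdj n))
      (fun p : Fin 2 × Fin n =>
        if ((p.1 : ℕ) = 0 ∧ (p.2 : ℕ) % 2 = 0) ∨
           ((p.1 : ℕ) = 1 ∧ ((p.2 : ℕ) % 2 = 1 ∨ (p.2 : ℕ) = n - 1)) then 1 else 0) ∧
    (∑ p : Fin 2 × Fin n,
        if ((p.1 : ℕ) = 0 ∧ (p.2 : ℕ) % 2 = 0) ∨
           ((p.1 : ℕ) = 1 ∧ ((p.2 : ℕ) % 2 = 1 ∨ (p.2 : ℕ) = n - 1)) then 1 else 0) = n + 1) ∧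
    italianDomNum (Fin 2 × Fin n) (cartAdj (cycleAdj 2) (cycleAdj n)) ≤ n + 1 := by
  obtain ⟨m, rfl⟩ := hodd
  have hidf : IsIDF (cartAdj (cycleAdj 2) (cycleAdj (2 * m + 1))) (prismLabel (2 * m + 1)) :=
    isIDF_cartAdj_cycle_of_pred (prismLabel_le_one _) (prismLabel_pred m)
  refine ⟨⟨hidf, sum_prismLabel m⟩, ?_⟩
  exact (italianDomNum_le_sum hidf).trans_eq (sum_prismLabel m)

theorem stmt7 (n : ℕ) (hn : 3 ≤ n) (hodd : Odd n) :
    (IsIDF (cartAdj (cycleAdj 2) (cycleAdj n))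
      (fun p : Fin 2 × Fin n =>
        if ((p.1 : ℕ) = 0 ∧ (p.2 : ℕ) % 2 = 0) ∨
           ((p.1 : ℕ) = 1 ∧ ((p.2 : ℕ) % 2 = 1 ∨ (p.2 : ℕ) = n - 1)) then 1 else 0) ∧
    (∑ p : Fin 2 × Fin n,
        if ((p.1 : ℕ) = 0 ∧ (p.2 : ℕ) % 2 = 0) ∨
           ((p.1 : ℕ) = 1 ∧ ((p.2 : ℕ) % 2 = 1 ∨ (p.2 : ℕ) = n - 1)) then 1 else 0) = n + 1) ∧
    italianDomNum (Fin 2 × Fin n) (cartAdj (cycleAdj 2) (cycleAdj n)) ≤ n + 1 :=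
  stmt7_general n hodd
end
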